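/- For every tiling instance T=(T,H,V,t0), there exists a proper tiling of T over ℕ×ℕ if and only if the EBBA formula α_T (the conjunction of α0, αH, αV, αHs, αVs, φH, φV and ψ defined in the context) is satisfiable in an increasing domain model. -/

import Mathlib

set_option maxHeartbeats 1000000

/-! ## Syntax of first-order modal logic (FOML)

Predicate symbols and variables are represented by natural numbers; an atom
`atom p args` applies the predicate symbol `p` to the list of variables `args`
(the arity of `p` in this occurrence is the length of `args`). -/
inductive Formula : Type where
  | atom (p : ℕ) (args : List ℕ)
  | neg  (φ : Formula)
  | and  (φ ψ : Formula)
  | or   (φ ψ : Formula)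
  | box  (φ : Formula)
  | dia  (φ : Formula)
  | ex   (x : ℕ) (φ : Formula)
  | all  (x : ℕ) (φ : Formula)
deriving DecidableEq

namespace Formula

def imp (φ ψ : Formula) : Formula := .or φ.neg ψ
def biimp (φ ψ : Formula) : Formula := .and (imp φ ψ) (imp ψ φ)
/-- a fixed tautology `⊤` -/
def top : Formula := .or (.atom 0 []) (.neg (.atom 0 []))
/-- a fixed contradiction `⊥` -/
def bot : Formula := .and (.atom 0 []) (.neg (.atom 0 []))

end Formula

def bigAnd (l : List Formula) : Formula := l.foldr Formula.and Formula.top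
def bigOr  (l : List Formula) : Formula := l.foldr Formula.or Formula.bot

/-! ## Semantics: Kripke structures with world-relative domains -/

structure Model where
  W : Type
  D : Type
  R : W → W → Prop
  dom : W → Set D
  ρ : W → ℕ → Set (List D)

/-- `M` is an increasing domain model: nonempty countable set of worlds, nonempty
countable domain, nonempty local domains that increase along the accessibility
relation, and interpretations of predicates at a world take values in the local
domain of that world. -/
def Model.Increasing (M : Model) : Prop :=
  Nonempty M.W ∧ Nonempty M.D ∧ Countable M.W ∧ Countable M.D ∧
    (∀ w, (M.dom w).Nonempty) ∧
    (∀ w v, M.R w v → M.dom w ⊆ M.dom v) ∧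
    (∀ w p l, l ∈ M.ρ w p → ∀ d ∈ l, d ∈ M.dom w)

def Model.sat (M : Model) : M.W → (ℕ → M.D) → Formula → Prop
  | w, σ, .atom p args => args.map σ ∈ M.ρ w p
  | w, σ, .neg φ => ¬ M.sat w σ φ
  | w, σ, .and φ ψ => M.sat w σ φ ∧ M.sat w σ ψ
  | w, σ, .or φ ψ => M.sat w σ φ ∨ M.sat w σ ψ
  | w, σ, .box φ => ∀ v, M.R w v → M.sat v σ φ
  | w, σ, .dia φ => ∃ v, M.R w v ∧ M.sat v σ φ
  | w, σ, .ex x φ => ∃ d ∈ M.dom w, M.sat w (Function.update σ x d) φ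
  | w, σ, .all x φ => ∀ d ∈ M.dom w, M.sat w (Function.update σ x d) φ

/-- the assignment `σ` is relevant at the world `w` -/
def Model.relevant (M : Model) (w : M.W) (σ : ℕ → M.D) : Prop := ∀ x, σ x ∈ M.dom w

/-- satisfiability over increasing domain models -/
def Satisfiable (φ : Formula) : Prop :=
  ∃ (M : Model), M.Increasing ∧ ∃ (w : M.W) (σ : ℕ → M.D), M.relevant w σ ∧ M.sat w σ φ
/-! ## Tiling problems and the encoding of a tiling instance -/

/-- A tiling instance `(T, H, V, t0)`: the tiles are `Fin numTiles`, with
horizontal constraints `H`, vertical constraints `V` and initial tile `t0`. -/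
structure TilingInstance where
  numTiles : ℕ
  t0 : Fin numTiles
  H : Finset (Fin numTiles × Fin numTiles)
  V : Finset (Fin numTiles × Fin numTiles)

/-- a proper tiling of the quadrant `ℕ × ℕ` -/
def ProperTiling (T : TilingInstance) (f : ℕ → ℕ → Fin T.numTiles) : Prop :=
  f 0 0 = T.t0 ∧
    (∀ i j, (f i j, f (i + 1) j) ∈ T.H) ∧
    (∀ i j, (f i j, f i (j + 1)) ∈ T.V)

/-- the binary predicate `P` (horizontal successor) -/
def atomP (x y : ℕ) : Formula := .atom 0 [x, y]
/-- the binary predicate `Q` (vertical successor) -/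
def atomQ (x y : ℕ) : Formula := .atom 1 [x, y]
/-- the unary predicate for tile `t` -/
def tileAt (m : ℕ) (t : Fin m) (x : ℕ) : Formula := .atom (2 + (t : ℕ)) [x]

/-- `OnlyT(t,x)`: `x` is tiled with `t` and with no other tile -/
def OnlyT (m : ℕ) (t : Fin m) (x : ℕ) : Formula :=
  .and (tileAt m t x)
    (bigAnd (((List.finRange m).filter (fun t' => decide (t' ≠ t))).map
      fun t' => .neg (tileAt m t' x)))

/-- `Hsuc(x,y)`: if `P(x,y)` then the tiles of `x` and `y` satisfy a horizontal constraint -/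
noncomputable def Hsuc (T : TilingInstance) (x y : ℕ) : Formula :=
  (atomP x y).imp
    (bigOr (T.H.toList.map fun p => .and (tileAt T.numTiles p.1 x) (tileAt T.numTiles p.2 y)))

/-- `Vsuc(x,y)`: if `Q(x,y)` then the tiles of `x` and `y` satisfy a vertical constraint -/
noncomputable def Vsuc (T : TilingInstance) (x y : ℕ) : Formula :=
  (atomQ x y).imp
    (bigOr (T.V.toList.map fun p => .and (tileAt T.numTiles p.1 x) (tileAt T.numTiles p.2 y)))

/-- `Δ⁰ := ⊤` and `Δⁿ := ◇⊤ ∧ □Δⁿ⁻¹` -/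
def delta : ℕ → Formula
  | 0 => .top
  | n + 1 => .and (.dia .top) (.box (delta n))
/-- The `EBBA` fragment: atomic formulas, negation, conjunction (and
disjunction), `□α`, `◇α`, and the bundles `∃x□α` and `□∀xα` together with
their duals `∀x◇α` and `◇∃xα`. -/
inductive EBBA : Formula → Prop where
  | atom (p : ℕ) (args : List ℕ) : EBBA (.atom p args)
  | neg {φ : Formula} : EBBA φ → EBBA (.neg φ)
  | and {φ ψ : Formula} : EBBA φ → EBBA ψ → EBBA (.and φ ψ)
  | or {φ ψ : Formula} : EBBA φ → EBBA ψ → EBBA (.or φ ψ)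
  | box {φ : Formula} : EBBA φ → EBBA (.box φ)
  | dia {φ : Formula} : EBBA φ → EBBA (.dia φ)
  | exBox {x : ℕ} {φ : Formula} : EBBA φ → EBBA (.ex x (.box φ))
  | allDia {x : ℕ} {φ : Formula} : EBBA φ → EBBA (.all x (.dia φ))
  | boxAll {x : ℕ} {φ : Formula} : EBBA φ → EBBA (.box (.all x φ))
  | diaEx {x : ℕ} {φ : Formula} : EBBA φ → EBBA (.dia (.ex x φ))

/-! ## The EBBA encoding of a tiling instance

Variables: `x0 := 0`, `x := 1`, `y := 2`, `z := 3`, `z' := 4`, `x1 := 5`, `x2 := 6`. -/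

/-- `α0 := ◇∃x0(□□OnlyT(t0,x0)) ∧ □∀x(⋁_{t∈T}□□OnlyT(t,x)) ∧ Δ³` -/
noncomputable def alpha0 (T : TilingInstance) : Formula :=
  .and (.dia (.ex 0 (.box (.box (OnlyT T.numTiles T.t0 0)))))
    (.and (.box (.all 1 (bigOr ((List.finRange T.numTiles).map
        fun t => .box (.box (OnlyT T.numTiles t 1))))))
      (delta 3))

/-- `αH := □∀x ∃x1 □□P(x,x1)` -/
def alphaH : Formula := .box (.all 1 (.ex 5 (.box (.box (atomP 1 5)))))

/-- `αV := □∀x ∃x2 □□Q(x,x2)` -/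
def alphaV : Formula := .box (.all 1 (.ex 6 (.box (.box (atomQ 1 6)))))

/-- `αHs := □∀x □∀y □Hsuc(x,y)` -/
noncomputable def alphaHs (T : TilingInstance) : Formula :=
  .box (.all 1 (.box (.all 2 (.box (Hsuc T 1 2)))))

/-- `αVs := □∀x □∀y □Vsuc(x,y)` -/
noncomputable def alphaVs (T : TilingInstance) : Formula :=
  .box (.all 1 (.box (.all 2 (.box (Vsuc T 1 2)))))

/-- `φH := □∀x □∀y (◇P(x,y) ↔ □P(x,y))` -/
def phiH : Formula :=
  .box (.all 1 (.box (.all 2 (Formula.biimp (.dia (atomP 1 2)) (.box (atomP 1 2))))))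

/-- `φV := □∀x □∀y (◇Q(x,y) ↔ □Q(x,y))` -/
def phiV : Formula :=
  .box (.all 1 (.box (.all 2 (Formula.biimp (.dia (atomQ 1 2)) (.box (atomQ 1 2))))))

/-- `ψ := □∀x □∀y ([∃z'□(Q(x,z') ∧ P(z',y))] → [□∀z(P(x,z) → Q(z,y))])` -/
def psiDiag : Formula :=
  .box (.all 1 (.box (.all 2
    (Formula.imp (.ex 4 (.box (.and (atomQ 1 4) (atomP 4 2))))
      (.box (.all 3 (Formula.imp (atomP 1 3) (atomQ 3 2))))))))

/-- `α_T`: the conjunction of all the encoding formulas -/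
noncomputable def alphaT (T : TilingInstance) : Formula :=
  bigAnd [alpha0 T, alphaH, alphaV, alphaHs T, alphaVs T, phiH, phiV, psiDiag]

/-!
A proper tiling `f` yields a one-world model: the domain is `ℕ × ℕ`, `P` and `Q` link a cell
to its right and upper neighbour, and the tile predicates read off `f`.

Conversely, let `v` be the successor of the root where the initial element `x₀` lives, and
`v R u R u'` (these exist by `Δ³`). On the local domain of `v`, `αH` and `αV` choose horizontal
and vertical successors `h` and `g` whose `P`- resp. `Q`-links hold at every two-step successor
of `v`, and `α0` gives each element a unique tile at `u'`. Reading tiles at `u'` along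
`h^i (g^j x₀)` gives the tiling. The vertical constraints need `Q(h^i x, h^i (g x))` at `u'`,
which follows by induction on `i` from `ψ`: by `φV` a link `Q(x, y)` at `u'` holds at every
successor of `u`, so `y` witnesses the premise of `ψ` for the pair `(x, h y)`, whence
`Q(h x, h y)` at `u'`.
-/

namespace Model

variable {M : Model} {w : M.W} {σ : ℕ → M.D}

@[simp] lemma sat_top : M.sat w σ Formula.top := by
  simp only [Formula.top, sat]; exact em _

@[simp] lemma sat_imp {φ ψ : Formula} :
    M.sat w σ (φ.imp ψ) ↔ (M.sat w σ φ → M.sat w σ ψ) := by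
  simp only [Formula.imp, sat]; tauto

@[simp] lemma sat_biimp {φ ψ : Formula} :
    M.sat w σ (φ.biimp ψ) ↔ (M.sat w σ φ ↔ M.sat w σ ψ) := by
  simp only [Formula.biimp, sat, sat_imp]; tauto

@[simp] lemma sat_bigAnd {l : List Formula} : M.sat w σ (bigAnd l) ↔ ∀ φ ∈ l, M.sat w σ φ := by
  induction l with
  | nil => simp [bigAnd]
  | cons φ l ih => simp_all [bigAnd, sat]

@[simp] lemma sat_bigOr {l : List Formula} : M.sat w σ (bigOr l) ↔ ∃ φ ∈ l, M.sat w σ φ := by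
  induction l with
  | nil => simp [bigOr, Formula.bot, sat]
  | cons φ l ih => simp_all [bigOr, sat]

def OnlyTile (M : Model) (w : M.W) {m : ℕ} (t : Fin m) (d : M.D) : Prop :=
  [d] ∈ M.ρ w (2 + t) ∧ ∀ t' : Fin m, t' ≠ t → [d] ∉ M.ρ w (2 + t')

variable {m : ℕ} {s s' t : Fin m} {a b : M.D}

lemma OnlyTile.eq_of_mem (h : M.OnlyTile w t a) (h' : [a] ∈ M.ρ w (2 + s)) : s = t := by
  by_contra hne
  exact h.2 s hne h'

lemma OnlyTile.pair_mem {C : Finset (Fin m × Fin m)} (ha : M.OnlyTile w s a)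
    (hb : M.OnlyTile w s' b)
    (h : ∃ t₁ t₂ : Fin m, (t₁, t₂) ∈ C ∧ [a] ∈ M.ρ w (2 + t₁) ∧ [b] ∈ M.ρ w (2 + t₂)) :
    (s, s') ∈ C := by
  obtain ⟨t₁, t₂, hC, h₁, h₂⟩ := h
  rwa [ha.eq_of_mem h₁, hb.eq_of_mem h₂] at hC

@[simp] lemma sat_OnlyT {x : ℕ} : M.sat w σ (OnlyT m t x) ↔ M.OnlyTile w t (σ x) := by
  simp [OnlyT, OnlyTile, tileAt, sat]

lemma sat_alpha0 {T : TilingInstance} :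
    M.sat w σ (alpha0 T) ↔
      (∃ v, M.R w v ∧ ∃ d ∈ M.dom v, ∀ u, M.R v u → ∀ u', M.R u u' → M.OnlyTile u' T.t0 d) ∧
      (∀ v, M.R w v → ∀ d ∈ M.dom v, ∃ t : Fin T.numTiles,
        ∀ u, M.R v u → ∀ u', M.R u u' → M.OnlyTile u' t d) ∧
      (∃ v, M.R w v) ∧ ∀ v, M.R w v → (∃ u, M.R v u) ∧ ∀ u, M.R v u → ∃ u', M.R u u' := by
  simp [alpha0, delta, sat, Function.update]

lemma sat_alphaH :
    M.sat w σ alphaH ↔ ∀ v, M.R w v → ∀ a ∈ M.dom v, ∃ b ∈ M.dom v,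
      ∀ u, M.R v u → ∀ u', M.R u u' → [a, b] ∈ M.ρ u' 0 := by
  simp [alphaH, atomP, sat, Function.update]

lemma sat_alphaV :
    M.sat w σ alphaV ↔ ∀ v, M.R w v → ∀ a ∈ M.dom v, ∃ b ∈ M.dom v,
      ∀ u, M.R v u → ∀ u', M.R u u' → [a, b] ∈ M.ρ u' 1 := by
  simp [alphaV, atomQ, sat, Function.update]

lemma sat_alphaHs {T : TilingInstance} :
    M.sat w σ (alphaHs T) ↔ ∀ v, M.R w v → ∀ a ∈ M.dom v, ∀ u, M.R v u →
      ∀ b ∈ M.dom u, ∀ u', M.R u u' → [a, b] ∈ M.ρ u' 0 →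
        ∃ t₁ t₂ : Fin T.numTiles, (t₁, t₂) ∈ T.H ∧
          [a] ∈ M.ρ u' (2 + t₁) ∧ [b] ∈ M.ρ u' (2 + t₂) := by
  simp [alphaHs, Hsuc, atomP, tileAt, sat, Function.update]

lemma sat_alphaVs {T : TilingInstance} :
    M.sat w σ (alphaVs T) ↔ ∀ v, M.R w v → ∀ a ∈ M.dom v, ∀ u, M.R v u →
      ∀ b ∈ M.dom u, ∀ u', M.R u u' → [a, b] ∈ M.ρ u' 1 →
        ∃ t₁ t₂ : Fin T.numTiles, (t₁, t₂) ∈ T.V ∧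
          [a] ∈ M.ρ u' (2 + t₁) ∧ [b] ∈ M.ρ u' (2 + t₂) := by
  simp [alphaVs, Vsuc, atomQ, tileAt, sat, Function.update]

lemma sat_phiH :
    M.sat w σ phiH ↔ ∀ v, M.R w v → ∀ a ∈ M.dom v, ∀ u, M.R v u → ∀ b ∈ M.dom u,
      ((∃ u', M.R u u' ∧ [a, b] ∈ M.ρ u' 0) ↔ ∀ u', M.R u u' → [a, b] ∈ M.ρ u' 0) := by
  simp [phiH, atomP, sat, Function.update]

lemma sat_phiV :
    M.sat w σ phiV ↔ ∀ v, M.R w v → ∀ a ∈ M.dom v, ∀ u, M.R v u → ∀ b ∈ M.dom u,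
      ((∃ u', M.R u u' ∧ [a, b] ∈ M.ρ u' 1) ↔ ∀ u', M.R u u' → [a, b] ∈ M.ρ u' 1) := by
  simp [phiV, atomQ, sat, Function.update]

lemma sat_psiDiag :
    M.sat w σ psiDiag ↔ ∀ v, M.R w v → ∀ a ∈ M.dom v, ∀ u, M.R v u → ∀ b ∈ M.dom u,
      (∃ c ∈ M.dom u, ∀ u', M.R u u' → [a, c] ∈ M.ρ u' 1 ∧ [c, b] ∈ M.ρ u' 0) →
        ∀ u', M.R u u' → ∀ z ∈ M.dom u', [a, z] ∈ M.ρ u' 0 → [z, b] ∈ M.ρ u' 1 := by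
  simp [psiDiag, atomP, atomQ, sat, Function.update]

lemma sat_alphaT {T : TilingInstance} :
    M.sat w σ (alphaT T) ↔ M.sat w σ (alpha0 T) ∧ M.sat w σ alphaH ∧ M.sat w σ alphaV ∧
      M.sat w σ (alphaHs T) ∧ M.sat w σ (alphaVs T) ∧ M.sat w σ phiH ∧ M.sat w σ phiV ∧
      M.sat w σ psiDiag := by
  simp [alphaT]

end Model

lemma ebba_top : EBBA Formula.top := .or (.atom 0 []) (.neg (.atom 0 []))

lemma ebba_imp {φ ψ : Formula} (hφ : EBBA φ) (hψ : EBBA ψ) : EBBA (φ.imp ψ) :=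
  .or (.neg hφ) hψ

lemma ebba_biimp {φ ψ : Formula} (hφ : EBBA φ) (hψ : EBBA ψ) : EBBA (φ.biimp ψ) :=
  .and (ebba_imp hφ hψ) (ebba_imp hψ hφ)

lemma ebba_bigAnd {l : List Formula} (h : ∀ φ ∈ l, EBBA φ) : EBBA (bigAnd l) := by
  induction l with
  | nil => exact ebba_top
  | cons φ l ih => exact .and (h φ List.mem_cons_self) (ih fun ψ hψ => h ψ (.tail φ hψ))

lemma ebba_bigOr {l : List Formula} (h : ∀ φ ∈ l, EBBA φ) : EBBA (bigOr l) := by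
  induction l with
  | nil => exact .and (.atom 0 []) (.neg (.atom 0 []))
  | cons φ l ih => exact .or (h φ List.mem_cons_self) (ih fun ψ hψ => h ψ (.tail φ hψ))

lemma ebba_bigAnd_map {α : Type*} {l : List α} {f : α → Formula} (h : ∀ a, EBBA (f a)) :
    EBBA (bigAnd (l.map f)) :=
  ebba_bigAnd (List.forall_mem_map.2 fun a _ => h a)

lemma ebba_bigOr_map {α : Type*} {l : List α} {f : α → Formula} (h : ∀ a, EBBA (f a)) :
    EBBA (bigOr (l.map f)) :=
  ebba_bigOr (List.forall_mem_map.2 fun a _ => h a)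

lemma ebba_delta : ∀ n, EBBA (delta n)
  | 0 => ebba_top
  | n + 1 => .and (.dia ebba_top) (.box (ebba_delta n))

lemma ebba_OnlyT {m : ℕ} {t : Fin m} {x : ℕ} : EBBA (OnlyT m t x) :=
  .and (.atom _ _) (ebba_bigAnd_map fun _ => .neg (.atom _ _))

lemma ebba_Hsuc {T : TilingInstance} {x y : ℕ} : EBBA (Hsuc T x y) :=
  ebba_imp (.atom _ _) (ebba_bigOr_map fun _ => .and (.atom _ _) (.atom _ _))

lemma ebba_Vsuc {T : TilingInstance} {x y : ℕ} : EBBA (Vsuc T x y) :=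
  ebba_imp (.atom _ _) (ebba_bigOr_map fun _ => .and (.atom _ _) (.atom _ _))

lemma ebba_alphaT (T : TilingInstance) : EBBA (alphaT T) := by
  refine ebba_bigAnd ?_
  simp only [List.mem_cons, List.not_mem_nil, or_false]
  rintro φ (rfl | rfl | rfl | rfl | rfl | rfl | rfl | rfl)
  · exact .and (.diaEx (.box (.box ebba_OnlyT)))
      (.and (.boxAll (ebba_bigOr_map fun _ => .box (.box ebba_OnlyT))) (ebba_delta 3))
  · exact .boxAll (.exBox (.box (.atom _ _)))
  · exact .boxAll (.exBox (.box (.atom _ _)))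
  · exact .boxAll (.boxAll (.box ebba_Hsuc))
  · exact .boxAll (.boxAll (.box ebba_Vsuc))
  · exact .boxAll (.boxAll (ebba_biimp (.dia (.atom _ _)) (.box (.atom _ _))))
  · exact .boxAll (.boxAll (ebba_biimp (.dia (.atom _ _)) (.box (.atom _ _))))
  · exact .boxAll (.boxAll (ebba_imp (.exBox (.and (.atom _ _) (.atom _ _)))
      (.boxAll (ebba_imp (.atom _ _) (.atom _ _)))))

abbrev tilingModel (T : TilingInstance) (f : ℕ → ℕ → Fin T.numTiles) : Model where
  W := Unit
  D := ℕ × ℕ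
  R _ _ := True
  dom _ := Set.univ
  ρ _ p l := match p, l with
    | 0, [a, b] => b = (a.1 + 1, a.2)
    | 1, [a, b] => b = (a.1, a.2 + 1)
    | n + 2, [a] => n = f a.1 a.2
    | _, _ => False

section TilingModel

variable {T : TilingInstance} {f : ℕ → ℕ → Fin T.numTiles}

lemma tilingModel_tile {w : Unit} {a : ℕ × ℕ} {t : Fin T.numTiles} :
    [a] ∈ (tilingModel T f).ρ w (2 + t) ↔ t = f a.1 a.2 := by
  rw [Nat.add_comm]
  exact Fin.val_inj

lemma tilingModel_onlyTile {w : Unit} {a : ℕ × ℕ} :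
    (tilingModel T f).OnlyTile w (f a.1 a.2) a :=
  ⟨tilingModel_tile.2 rfl, fun _ hne h => hne (tilingModel_tile.1 h)⟩

lemma tilingModel_increasing : (tilingModel T f).Increasing :=
  ⟨⟨()⟩, ⟨((0, 0) : ℕ × ℕ)⟩, inferInstanceAs (Countable Unit),
    inferInstanceAs (Countable (ℕ × ℕ)), fun _ => ⟨((0, 0) : ℕ × ℕ), trivial⟩,
    fun _ _ _ => subset_rfl, fun _ _ _ _ _ _ => Set.mem_univ _⟩

lemma tilingModel_sat_alphaT (hf : ProperTiling T f) (σ : ℕ → ℕ × ℕ) :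
    (tilingModel T f).sat () σ (alphaT T) := by
  obtain ⟨hf₀, hH, hV⟩ := hf
  simp only [Model.sat_alphaT, Model.sat_alpha0, Model.sat_alphaH, Model.sat_alphaV,
    Model.sat_alphaHs, Model.sat_alphaVs, Model.sat_phiH, Model.sat_phiV, Model.sat_psiDiag]
  have rigid {p : ℕ} {a b : ℕ × ℕ} :
      (∃ u : Unit, True ∧ [a, b] ∈ (tilingModel T f).ρ u p) ↔
        ∀ u : Unit, True → [a, b] ∈ (tilingModel T f).ρ u p :=
    ⟨fun ⟨_, _, h⟩ _ _ => h, fun h => ⟨(), trivial, h () trivial⟩⟩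
  refine ⟨⟨⟨(), trivial, (0, 0), trivial,
        fun _ _ _ _ => hf₀ ▸ tilingModel_onlyTile (a := (0, 0))⟩,
      fun _ _ a _ => ⟨_, fun _ _ _ _ => tilingModel_onlyTile⟩,
      ⟨(), trivial⟩, fun _ _ => ⟨⟨(), trivial⟩, fun _ _ => ⟨(), trivial⟩⟩⟩,
    fun _ _ a _ => ⟨(a.1 + 1, a.2), trivial, fun _ _ _ _ => rfl⟩,
    fun _ _ a _ => ⟨(a.1, a.2 + 1), trivial, fun _ _ _ _ => rfl⟩, ?_, ?_,
    fun _ _ _ _ _ _ _ _ => rigid, fun _ _ _ _ _ _ _ _ => rigid, ?_⟩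
  · rintro _ _ a _ _ _ b _ u _ (rfl : b = _)
    exact ⟨f a.1 a.2, f (a.1 + 1) a.2, hH a.1 a.2, (tilingModel_tile (w := u)).2 rfl,
      (tilingModel_tile (w := u)).2 rfl⟩
  · rintro _ _ a _ _ _ b _ u _ (rfl : b = _)
    exact ⟨f a.1 a.2, f a.1 (a.2 + 1), hV a.1 a.2, (tilingModel_tile (w := u)).2 rfl,
      (tilingModel_tile (w := u)).2 rfl⟩
  · rintro _ _ a _ _ _ b _ ⟨c, -, hc⟩ _ _ z _ (rfl : z = _)
    obtain ⟨(rfl : c = _), (rfl : b = _)⟩ := hc () trivial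
    rfl

end TilingModel

lemma properTiling_iterate {X : Type*} {T : TilingInstance} {x₀ : X} {h g : X → X}
    {tile : X → Fin T.numTiles} {Q : X → X → Prop} (h₀ : tile x₀ = T.t0)
    (hH : ∀ x, (tile x, tile (h x)) ∈ T.H) (hV : ∀ x y, Q x y → (tile x, tile y) ∈ T.V)
    (hg : ∀ x, Q x (g x)) (hQh : ∀ x y, Q x y → Q (h x) (h y)) :
    ProperTiling T fun i j => tile (h^[i] (g^[j] x₀)) := by
  have hQ (i : ℕ) (x : X) : Q (h^[i] x) (h^[i] (g x)) := by
    induction i with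
    | zero => exact hg x
    | succ i ih => simpa only [Function.iterate_succ_apply'] using hQh _ _ ih
  refine ⟨h₀, fun i j => ?_, fun i j => ?_⟩
  · simpa only [Function.iterate_succ_apply'] using hH _
  · simpa only [Function.iterate_succ_apply'] using hV _ _ (hQ i _)

theorem exists_properTiling_of_sat {T : TilingInstance} {M : Model} {w : M.W} {σ : ℕ → M.D}
    (hinc : ∀ v u, M.R v u → M.dom v ⊆ M.dom u) (hsat : M.sat w σ (alphaT T)) :
    ∃ f : ℕ → ℕ → Fin T.numTiles, ProperTiling T f := by
  simp only [Model.sat_alphaT, Model.sat_alpha0, Model.sat_alphaH, Model.sat_alphaV,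
    Model.sat_alphaHs, Model.sat_alphaVs, Model.sat_phiV, Model.sat_psiDiag] at hsat
  obtain ⟨⟨⟨v, hwv, x₀, hx₀, hx₀t⟩, htile, -, hΔ⟩, hH, hV, hHs, hVs, -, hφV, hψ⟩ := hsat
  obtain ⟨⟨u, hvu⟩, hu⟩ := hΔ v hwv
  obtain ⟨u', huu'⟩ := hu u hvu
  have hdom_u : M.dom v ⊆ M.dom u := hinc v u hvu
  have hdom_u' : M.dom v ⊆ M.dom u' := hdom_u.trans (hinc u u' huu')
  choose h hhv hP using fun x : M.dom v => hH v hwv x x.2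
  choose g hgv hQ using fun x : M.dom v => hV v hwv x x.2
  choose tile htile using fun x : M.dom v => htile v hwv x x.2
  have hOnly (x : M.dom v) : M.OnlyTile u' (tile x) x := htile x u hvu u' huu'
  refine ⟨_, properTiling_iterate (x₀ := ⟨x₀, hx₀⟩) (h := fun x => ⟨h x, hhv x⟩)
    (g := fun x => ⟨g x, hgv x⟩) (tile := tile) (Q := fun x y => [x.1, y.1] ∈ M.ρ u' 1)
    ?_ (fun x => ?_) (fun x y hxy => ?_) (fun x => hQ x u hvu u' huu') (fun x y hxy => ?_)⟩
  · exact ((hOnly _).eq_of_mem (hx₀t u hvu u' huu').1).symm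
  · exact (hOnly x).pair_mem (hOnly _)
      (hHs v hwv x x.2 u hvu _ (hdom_u (hhv x)) u' huu' (hP x u hvu u' huu'))
  · exact (hOnly x).pair_mem (hOnly y) (hVs v hwv x x.2 u hvu y (hdom_u y.2) u' huu' hxy)
  · have hQxy : ∀ u₂, M.R u u₂ → [x.1, y.1] ∈ M.ρ u₂ 1 :=
      (hφV v hwv x x.2 u hvu y (hdom_u y.2)).1 ⟨u', huu', hxy⟩
    exact hψ v hwv x x.2 u hvu (h y) (hdom_u (hhv y))
      ⟨y, hdom_u y.2, fun u₂ h₂ => ⟨hQxy u₂ h₂, hP y u hvu u₂ h₂⟩⟩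
      u' huu' (h x) (hdom_u' (hhv x)) (hP x u hvu u' huu')

/-- For every tiling instance `T`, the encoding formula `α_T`
is in the `EBBA` fragment, and there exists a proper tiling of `T` over `ℕ × ℕ`
iff `α_T` is satisfiable in an increasing domain model. -/
theorem ebba_tiling_encoding (T : TilingInstance) :
    EBBA (alphaT T) ∧
      ((∃ f : ℕ → ℕ → Fin T.numTiles, ProperTiling T f) ↔ Satisfiable (alphaT T)) := by
  refine ⟨ebba_alphaT T, ?_, ?_⟩
  · rintro ⟨f, hf⟩
    exact ⟨tilingModel T f, tilingModel_increasing, (), fun _ => (0, 0), fun _ => trivial,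
      tilingModel_sat_alphaT hf _⟩
  · rintro ⟨M, ⟨-, -, -, -, -, hinc, -⟩, w, σ, -, hsat⟩
    exact exists_properTiling_of_sat hinc hsat
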